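/- arXiv:1009.2602 — 5 statements merged into one kernel-verified Lean document; each statement's English description precedes it below -/
import Mathlib

section
/- Under the homogeneous rate assumption, the joint channel probing and scheduling problem is a monotone stopping problem: for every integer j with 0 ≤ j, j+2 ≤ K and (j+2)β ≤ 1, the event ℰ_j = {ω : (1−jβ)·w_j(ω) ≥ (1−(j+1)β)·φ_{j+1}(w_j(ω))} is contained in the event ℰ_{j+1} = {ω : (1−(j+1)β)·w_{j+1}(ω) ≥ (1−(j+2)β)·φ_{j+2}(w_{j+1}(ω))}. -/
/-!
Write `a = 1 - jβ`, `b = 1 - (j+1)β`, `d = 1 - (j+2)β`, `w = w_j`, `w' = w_{j+1}`. Adding one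
more observation to the running maximum costs at most `w' - w` in `φ`, and passing from `s_{j+1}`
to the stochastically smaller `s_{j+2}` can only lower `φ`, so `φ_{j+2}(w') ≤ φ_{j+1}(w) + (w' - w)`.
On `ℰ_j` we have `b φ_{j+1}(w) ≤ a w`, and `a d = b² - β² ≤ b²` together with `w ≥ 0` turns this
into `d φ_{j+1}(w) ≤ b w`; since also `d ≤ b`, adding `d (w' - w) ≤ b (w' - w)` gives `ℰ_{j+1}`.
-/

open MeasureTheory ProbabilityTheory

section IntegralMax

variable {Ω Ω' : Type*} [MeasurableSpace Ω] [MeasurableSpace Ω'] {μ : Measure Ω}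
  {Y Z : Ω → ℝ}

lemma MeasureTheory.Integrable.const_max [IsFiniteMeasure μ] (hY : Integrable Y μ) (x : ℝ) :
    Integrable (fun ω => max x (Y ω)) μ :=
  (integrable_const x).sup hY

lemma integral_const_max_mono [IsFiniteMeasure μ] (hY : Integrable Y μ) (hZ : Integrable Z μ)
    (hYZ : Y ≤ᵐ[μ] Z) (x : ℝ) :
    ∫ ω, max x (Y ω) ∂μ ≤ ∫ ω, max x (Z ω) ∂μ :=
  integral_mono_ae (hY.const_max x) (hZ.const_max x) <| hYZ.mono fun _ h => max_le_max le_rfl h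

lemma integral_const_max_le_add_sub [IsProbabilityMeasure μ] (hY : Integrable Y μ) {x y : ℝ}
    (hxy : x ≤ y) :
    ∫ ω, max y (Y ω) ∂μ ≤ ∫ ω, max x (Y ω) ∂μ + (y - x) := by
  have hshift : ∫ ω, max x (Y ω) ∂μ + (y - x) = ∫ ω, (max x (Y ω) + (y - x)) ∂μ := by
    rw [integral_add (hY.const_max x) (integrable_const _), integral_const, probReal_univ,
      one_smul]
  rw [hshift]
  refine integral_mono (hY.const_max y) ((hY.const_max x).add (integrable_const _)) fun ω => ?_
  exact max_le (by linarith [le_max_left x (Y ω)]) (by linarith [le_max_right x (Y ω)])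

lemma ProbabilityTheory.IdentDistrib.integral_const_max_const_mul {μ' : Measure Ω'} {Y' : Ω' → ℝ}
    (h : IdentDistrib Y Y' μ μ') (x c : ℝ) :
    ∫ ω, max x (c * Y ω) ∂μ = ∫ ω, max x (c * Y' ω) ∂μ' :=
  (h.comp (measurable_const.max (measurable_const.mul measurable_id))).integral_eq

lemma integral_const_max_mul_le_of_identDistrib [IsFiniteMeasure μ] (hY : Integrable Y μ)
    (hY0 : ∀ ω, 0 ≤ Y ω) (hYZ : IdentDistrib Y Z μ μ) {c d : ℝ} (hdc : d ≤ c) (x : ℝ) :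
    ∫ ω, max x (d * Y ω) ∂μ ≤ ∫ ω, max x (c * Z ω) ∂μ := by
  calc ∫ ω, max x (d * Y ω) ∂μ ≤ ∫ ω, max x (c * Y ω) ∂μ :=
        integral_const_max_mono (hY.const_mul d) (hY.const_mul c)
          (Filter.Eventually.of_forall fun ω => mul_le_mul_of_nonneg_right hdc (hY0 ω)) x
    _ = ∫ ω, max x (c * Z ω) ∂μ := hYZ.integral_const_max_const_mul x c

end IntegralMax

lemma one_stage_lookahead_mono {β t w w' p q : ℝ} (hβ : 0 < β) (ht : (t + 2) * β ≤ 1)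
    (hw : 0 ≤ w) (hww' : w ≤ w') (hqp : q ≤ p + (w' - w))
    (hp : (1 - (t + 1) * β) * p ≤ (1 - t * β) * w) :
    (1 - (t + 2) * β) * q ≤ (1 - (t + 1) * β) * w' := by
  set b := 1 - (t + 1) * β
  set d := 1 - (t + 2) * β
  have hd : 0 ≤ d := by linarith
  have hb : 0 < b := by linarith
  have hdb : d ≤ b := by linarith
  have hdp : d * p ≤ b * w := by
    refine le_of_mul_le_mul_left ?_ hb
    calc b * (d * p) = d * (b * p) := by ring
      _ ≤ d * ((1 - t * β) * w) := mul_le_mul_of_nonneg_left hp hd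
      _ = (b ^ 2 - β ^ 2) * w := by ring
      _ ≤ b * (b * w) := by nlinarith
  calc d * q ≤ d * (p + (w' - w)) := mul_le_mul_of_nonneg_left hqp hd
    _ = d * p + d * (w' - w) := mul_add _ _ _
    _ ≤ b * w + b * (w' - w) :=
        add_le_add hdp (mul_le_mul_of_nonneg_right hdb (sub_nonneg.mpr hww'))
    _ = b * w' := by ring

/-- The joint channel probing and scheduling problem is a monotone stopping problem:
the one-stage look-ahead stopping event after `j` probes is contained in the one after
`j+1` probes. -/
theorem monotone_stopping_problem
    {Ω : Type*} [MeasureSpace Ω] [IsProbabilityMeasure (ℙ : Measure Ω)]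
    (K : ℕ) (X : Fin K → Ω → ℝ)
    (hXnonneg : ∀ k ω, 0 ≤ X k ω)
    (hXint : ∀ k, Integrable (X k) ℙ)
    (hXident : ∀ k l, IdentDistrib (X k) (X l) ℙ ℙ)
    (c : Fin K → ℝ)
    (hc_mono : ∀ k l : Fin K, k ≤ l → c l ≤ c k)
    (β : ℝ) (hβ0 : 0 < β)
    (s : Fin K → Ω → ℝ) (hs : ∀ k ω, s k ω = c k * X k ω)
    (w : ℕ → Ω → ℝ)
    (hw0 : ∀ ω, w 0 ω = 0)
    (hw : ∀ j : ℕ, ∀ hj : j + 1 ≤ K, ∀ ω,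
      w (j + 1) ω = max (w j ω) (s ⟨j, by omega⟩ ω))
    (φ : Fin K → ℝ → ℝ)
    (hφ : ∀ k x, φ k x = ∫ ω, max x (s k ω) ∂ℙ)
    (j : ℕ) (hj : j + 2 ≤ K) (hjβ : ((j : ℝ) + 2) * β ≤ 1) :
    {ω | (1 - (j : ℝ) * β) * w j ω ≥
        (1 - ((j : ℝ) + 1) * β) * φ ⟨j, by omega⟩ (w j ω)} ⊆
    {ω | (1 - ((j : ℝ) + 1) * β) * w (j + 1) ω ≥
        (1 - ((j : ℝ) + 2) * β) * φ ⟨j + 1, by omega⟩ (w (j + 1) ω)} := by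
  intro ω hω
  have hw_mono : MonotoneOn (w · ω) (Set.Iic K) :=
    monotoneOn_of_le_add_one Set.ordConnected_Iic fun i _ _ hi =>
      (hw i hi ω).ge.trans' (le_max_left _ _)
  have hw_nonneg : 0 ≤ w j ω :=
    (hw0 ω).ge.trans (hw_mono (Nat.zero_le K) (show j ≤ K by omega) j.zero_le)
  have hw_le : w j ω ≤ w (j + 1) ω :=
    hw_mono (show j ≤ K by omega) (show j + 1 ≤ K by omega) j.le_succ
  refine one_stage_lookahead_mono hβ0 hjβ hw_nonneg hw_le ?_ hω
  simp only [hφ, hs]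
  exact (integral_const_max_le_add_sub ((hXint _).const_mul _) hw_le).trans <|
    add_le_add_left (integral_const_max_mul_le_of_identDistrib (hXint _) (hXnonneg _)
      (hXident _ _) (hc_mono _ _ (Fin.mk_le_mk.mpr j.le_succ)) _) _
end

section
/- The one-stage look-ahead function f_j is nondecreasing on [0,∞): for all reals w' ≥ w ≥ 0, f_j(w') ≥ f_j(w). -/
open MeasureTheory

/-!
Integrating the pointwise `1`-Lipschitz bound on `x ↦ max x s` shows that `x ↦ E[max(x, S)]` is
`1`-Lipschitz. Hence `f_j(w') - f_j(w) ≥ ((1 - jβ) - (1 - (j+1)β)) (w' - w) = β (w' - w) ≥ 0`.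
-/

theorem lipschitzWith_integral_max_const {Ω : Type*} [MeasurableSpace Ω] {P : Measure Ω}
    [IsProbabilityMeasure P] {S : Ω → ℝ} (hS : Integrable S P) :
    LipschitzWith 1 fun x : ℝ => ∫ ω, max x (S ω) ∂P := by
  have hint : ∀ x : ℝ, Integrable (fun ω => max x (S ω)) P := fun x =>
    (integrable_const x).sup hS
  refine LipschitzWith.of_le_add fun x y => ?_
  calc ∫ ω, max x (S ω) ∂P
      ≤ ∫ ω, (max y (S ω) + dist x y) ∂P := by
        refine integral_mono (hint x) ((hint y).add (integrable_const _)) fun ω => ?_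
        simpa using (LipschitzWith.id.max_const (S ω)).le_add_mul x y
    _ = ∫ ω, max y (S ω) ∂P + dist x y := by
        rw [integral_add (hint y) (integrable_const _), integral_const, probReal_univ, one_smul]

theorem one_stage_lookahead_monotone_general
    {Ω : Type*} [MeasurableSpace Ω] (P : Measure Ω) [IsProbabilityMeasure P]
    (S : Ω → ℝ)
    (hSint : Integrable S P)
    (β : ℝ) (hβ0 : 0 < β)
    (j : ℕ) (hjβ : ((j : ℝ) + 1) * β ≤ 1)
    (f : ℝ → ℝ)
    (hf : ∀ x, f x = (1 - (j : ℝ) * β) * x -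
      (1 - ((j : ℝ) + 1) * β) * ∫ ω, max x (S ω) ∂P)
    (w w' : ℝ) (hww' : w ≤ w') :
    f w ≤ f w' := by
  have hI : ∫ ω, max w' (S ω) ∂P ≤ ∫ ω, max w (S ω) ∂P + (w' - w) := by
    simpa [Real.dist_eq, abs_of_nonneg (sub_nonneg.2 hww')] using
      (lipschitzWith_integral_max_const hSint).le_add_mul w' w
  have hc : 0 ≤ 1 - ((j : ℝ) + 1) * β := sub_nonneg.2 hjβ
  rw [hf w, hf w']
  linarith [mul_le_mul_of_nonneg_left hI hc, mul_nonneg hβ0.le (sub_nonneg.2 hww')]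

/-- The one-stage look-ahead function `f_j` is nondecreasing on `[0, ∞)`. -/
theorem one_stage_lookahead_monotone
    {Ω : Type*} [MeasurableSpace Ω] (P : Measure Ω) [IsProbabilityMeasure P]
    (S : Ω → ℝ) (hSmeas : Measurable S) (hSnonneg : ∀ ω, 0 ≤ S ω)
    (hSint : Integrable S P)
    (β : ℝ) (hβ0 : 0 < β) (hβ1 : β < 1)
    (j : ℕ) (hjβ : ((j : ℝ) + 1) * β ≤ 1)
    (f : ℝ → ℝ)
    (hf : ∀ x, f x = (1 - (j : ℝ) * β) * x -
      (1 - ((j : ℝ) + 1) * β) * ∫ ω, max x (S ω) ∂P)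
    (w w' : ℝ) (hw : 0 ≤ w) (hww' : w ≤ w') :
    f w ≤ f w' :=
  one_stage_lookahead_monotone_general P S hSint β hβ0 j hjβ f hf w w' hww'
end

section
/- If in addition (j+1)β < 1 and E[S] > 0, then f_j(0) < 0, f_j(w) ≥ β·w − (1−(j+1)β)·E[S] for every w ≥ 0 (so f_j(w) → ∞ as w → ∞), and there exists a threshold w_th > 0 such that for every w ≥ 0, f_j(w) ≥ 0 if and only if w ≥ w_th; that is, the stopping region {w ≥ 0 : f_j(w) ≥ 0} equals the interval [w_th, ∞). -/
/-!
Write `f w = a w - b I(w)` with `a = 1 - jβ`, `b = 1 - (j+1)β` and `I(w) = E[max(w, S)]`.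
Since `w ↦ max(w, s)` is 1-Lipschitz for every `s`, so is `I`; as `a - b = β > 0`, the function
`f` is continuous and strictly increasing, with `f(w) ≥ βw - b E[S]`. It is negative at `0`
(where `I(0) = E[S] > 0`) and positive for large `w`, so it has exactly one zero `w_th > 0`,
and `f ≥ 0` exactly on `[w_th, ∞)`.
-/

open MeasureTheory

section IntegralMax

variable {Ω : Type*} [MeasurableSpace Ω] {P : Measure Ω} {S : Ω → ℝ}

theorem lipschitzWith_integral_max [IsProbabilityMeasure P] (hS : Integrable S P) :
    LipschitzWith 1 fun w => ∫ ω, max w (S ω) ∂P := by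
  have hmax : ∀ w, Integrable (fun ω => max w (S ω)) P := fun w => (integrable_const w).sup hS
  refine LipschitzWith.of_le_add_mul 1 fun x y => ?_
  have hpoint : ∀ ω, max x (S ω) ≤ max y (S ω) + dist x y := fun ω => by
    have := abs_max_sub_max_le_abs x y (S ω)
    rw [Real.dist_eq]
    linarith [le_abs_self (max x (S ω) - max y (S ω))]
  calc ∫ ω, max x (S ω) ∂P
      ≤ ∫ ω, (max y (S ω) + dist x y) ∂P :=
        integral_mono (hmax x) ((hmax y).add (integrable_const _)) hpoint
    _ = ∫ ω, max y (S ω) ∂P + ((1 : NNReal) : ℝ) * dist x y := by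
        rw [integral_add (hmax y) (integrable_const _)]
        simp

theorem integral_max_zero_of_nonneg (hS : ∀ ω, 0 ≤ S ω) :
    ∫ ω, max 0 (S ω) ∂P = ∫ ω, S ω ∂P := by
  simp only [max_eq_right (hS _)]

theorem integral_max_le_integral_add [IsProbabilityMeasure P] (hS : Integrable S P)
    (hS0 : ∀ ω, 0 ≤ S ω) {w : ℝ} (hw : 0 ≤ w) :
    ∫ ω, max w (S ω) ∂P ≤ ∫ ω, S ω ∂P + w := by
  have := (lipschitzWith_integral_max hS).le_add_mul w 0
  rw [integral_max_zero_of_nonneg hS0, Real.dist_eq, sub_zero, abs_of_nonneg hw] at this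
  simpa using this

theorem strictMono_mul_sub_mul_integral_max [IsProbabilityMeasure P] (hS : Integrable S P)
    {a b : ℝ} (hb : 0 ≤ b) (hba : b < a) :
    StrictMono fun w => a * w - b * ∫ ω, max w (S ω) ∂P := by
  intro w w' hww'
  have hlip := (lipschitzWith_integral_max hS).le_add_mul w' w
  rw [Real.dist_eq, abs_of_pos (sub_pos.2 hww')] at hlip
  simp only [NNReal.coe_one, one_mul] at hlip
  nlinarith [mul_le_mul_of_nonneg_left hlip hb]

end IntegralMax

theorem exists_pos_threshold_of_strictMono {g : ℝ → ℝ} (hcont : Continuous g)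
    (hmono : StrictMono g) (hg0 : g 0 < 0) {W : ℝ} (hgW : 0 < g W) :
    ∃ t, 0 < t ∧ ∀ w, 0 ≤ g w ↔ t ≤ w := by
  have hW : 0 < W := hmono.lt_iff_lt.1 (hg0.trans hgW)
  obtain ⟨t, ht, hgt⟩ := intermediate_value_Icc hW.le hcont.continuousOn ⟨hg0.le, hgW.le⟩
  have ht0 : 0 < t := hmono.lt_iff_lt.1 (hgt ▸ hg0)
  exact ⟨t, ht0, fun w => hgt ▸ hmono.le_iff_le⟩

theorem one_stage_lookahead_threshold_general
    {Ω : Type*} [MeasurableSpace Ω] (P : Measure Ω) [IsProbabilityMeasure P]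
    (S : Ω → ℝ) (hSnonneg : ∀ ω, 0 ≤ S ω)
    (hSint : Integrable S P)
    (β : ℝ) (hβ0 : 0 < β)
    (j : ℕ) (hjβ : ((j : ℝ) + 1) * β < 1)
    (hSmean : 0 < ∫ ω, S ω ∂P)
    (f : ℝ → ℝ)
    (hf : ∀ x, f x = (1 - (j : ℝ) * β) * x -
      (1 - ((j : ℝ) + 1) * β) * ∫ ω, max x (S ω) ∂P) :
    f 0 < 0 ∧
    (∀ w : ℝ, 0 ≤ w →
      β * w - (1 - ((j : ℝ) + 1) * β) * ∫ ω, S ω ∂P ≤ f w) ∧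
    ∃ wth : ℝ, 0 < wth ∧ ∀ w : ℝ, 0 ≤ w → (0 ≤ f w ↔ wth ≤ w) := by
  set b : ℝ := 1 - ((j : ℝ) + 1) * β
  have hb : 0 < b := sub_pos.2 hjβ
  have hf0 : f 0 < 0 := by
    rw [hf, integral_max_zero_of_nonneg hSnonneg]
    nlinarith [mul_pos hb hSmean]
  have hlower : ∀ w, 0 ≤ w → β * w - b * ∫ ω, S ω ∂P ≤ f w := fun w hw => by
    rw [hf]
    nlinarith [mul_le_mul_of_nonneg_left (integral_max_le_integral_add hSint hSnonneg hw) hb.le]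
  have hmono : StrictMono f := by
    rw [funext hf]
    exact strictMono_mul_sub_mul_integral_max hSint hb.le (by linarith)
  have hcont : Continuous f := by
    rw [funext hf]
    exact (continuous_const.mul continuous_id).sub
      (continuous_const.mul (lipschitzWith_integral_max hSint).continuous)
  -- at `W = (b E[S] + 1) / β` the lower bound `βW - b E[S]` equals `1`
  have hfW : 0 < f ((b * ∫ ω, S ω ∂P + 1) / β) := by
    have hnum : 0 < b * ∫ ω, S ω ∂P + 1 := by linarith [mul_pos hb hSmean]
    have := hlower _ (div_pos hnum hβ0).le
    rw [mul_div_cancel₀ _ hβ0.ne'] at this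
    linarith
  obtain ⟨wth, hwth, hiff⟩ := exists_pos_threshold_of_strictMono hcont hmono hf0 hfW
  exact ⟨hf0, hlower, wth, hwth, fun w _ => hiff w⟩

/-- If `(j+1)β < 1` and `E[S] > 0`, then `f_j(0) < 0`,
`f_j(w) ≥ β w - (1-(j+1)β) E[S]` for every `w ≥ 0`, and there is a threshold
`w_th > 0` such that the stopping region `{w ≥ 0 : f_j(w) ≥ 0}` is exactly `[w_th, ∞)`. -/
theorem one_stage_lookahead_threshold
    {Ω : Type*} [MeasurableSpace Ω] (P : Measure Ω) [IsProbabilityMeasure P]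
    (S : Ω → ℝ) (hSmeas : Measurable S) (hSnonneg : ∀ ω, 0 ≤ S ω)
    (hSint : Integrable S P)
    (β : ℝ) (hβ0 : 0 < β) (hβ1 : β < 1)
    (j : ℕ) (hjβ : ((j : ℝ) + 1) * β < 1)
    (hSmean : 0 < ∫ ω, S ω ∂P)
    (f : ℝ → ℝ)
    (hf : ∀ x, f x = (1 - (j : ℝ) * β) * x -
      (1 - ((j : ℝ) + 1) * β) * ∫ ω, max x (S ω) ∂P) :
    f 0 < 0 ∧
    (∀ w : ℝ, 0 ≤ w →
      β * w - (1 - ((j : ℝ) + 1) * β) * ∫ ω, S ω ∂P ≤ f w) ∧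
    ∃ wth : ℝ, 0 < wth ∧ ∀ w : ℝ, 0 ≤ w → (0 ≤ f w ↔ wth ≤ w) :=
  one_stage_lookahead_threshold_general P S hSnonneg hSint β hβ0 j hjβ hSmean f hf
end

section
/- Assume (j+2)β < 1, let v_j ≥ 0 and v_{j+1} ≥ 0 satisfy v_j = g_j(v_j) and v_{j+1} = g_{j+1}(v_{j+1}), and assume P(X > v_{j+1}) > 0. Then v_{j+1} < v_j: the static stopping thresholds are strictly decreasing in the number of probed users. -/
open MeasureTheory

/-!
The coefficient `c_m = 1/β - (m+1)` of `g_m` drops by exactly one from `m = j` to `m = j+1`,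
and `c_j > 0` because `(j+2)β < 1`. If `v_j ≤ v_{j+1}`, then `E[(X - v_j)⁺] ≥ E[(X - v_{j+1})⁺] > 0`
since `v ↦ E[(X - v)⁺]` is antitone, so
`v_j = c_j E[(X - v_j)⁺] ≥ c_j E[(X - v_{j+1})⁺] > c_{j+1} E[(X - v_{j+1})⁺] = v_{j+1}`.
-/

theorem lt_of_eq_mul_of_eq_succ_mul {F : ℝ → ℝ} (hF : Antitone F) {c v₀ v₁ : ℝ}
    (hc : 0 ≤ c + 1) (hF₁ : 0 < F v₁) (h₁ : v₁ = c * F v₁) (h₀ : v₀ = (c + 1) * F v₀) :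
    v₁ < v₀ := by
  by_contra! hle
  have hF₀ : (c + 1) * F v₁ ≤ (c + 1) * F v₀ := mul_le_mul_of_nonneg_left (hF hle) hc
  linarith

section ExpectedExcess

variable {Ω : Type*} [MeasurableSpace Ω] {P : Measure Ω} {X : Ω → ℝ}

noncomputable def expectedExcess (P : Measure Ω) (X : Ω → ℝ) (v : ℝ) : ℝ :=
  ∫ ω, max (X ω - v) 0 ∂P

theorem integrable_posPart_sub_const [IsFiniteMeasure P] (hX : Integrable X P) (v : ℝ) :
    Integrable (fun ω => max (X ω - v) 0) P :=
  (hX.sub (integrable_const v)).pos_part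

theorem expectedExcess_antitone [IsFiniteMeasure P] (hX : Integrable X P) :
    Antitone (expectedExcess P X) := fun _ _ hvw =>
  integral_mono (integrable_posPart_sub_const hX _) (integrable_posPart_sub_const hX _)
    fun _ => max_le_max (by linarith) le_rfl

theorem expectedExcess_pos [IsFiniteMeasure P] (hX : Integrable X P) {v : ℝ}
    (hv : 0 < P {ω | v < X ω}) : 0 < expectedExcess P X v := by
  refine (integral_pos_iff_support_of_nonneg_ae (.of_forall fun _ => le_max_right _ _)
    (integrable_posPart_sub_const hX v)).mpr (hv.trans_le (measure_mono fun ω hω => ?_))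
  exact (lt_max_of_lt_left (sub_pos.mpr hω)).ne'

end ExpectedExcess

theorem static_thresholds_strictly_decreasing_general
    {Ω : Type*} [MeasurableSpace Ω] (P : Measure Ω) [IsProbabilityMeasure P]
    (X : Ω → ℝ) (hXint : Integrable X P)
    (β : ℝ) (hβ0 : 0 < β)
    (j : ℕ) (hjβ : ((j : ℝ) + 2) * β < 1)
    (g : ℕ → ℝ → ℝ)
    (hg : ∀ (m : ℕ) (v : ℝ),
      g m v = (1 / β - ((m : ℝ) + 1)) * ∫ ω, max (X ω - v) 0 ∂P)
    (vj vj1 : ℝ)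
    (hfix_j : vj = g j vj) (hfix_j1 : vj1 = g (j + 1) vj1)
    (hXpos : 0 < P {ω | vj1 < X ω}) :
    vj1 < vj := by
  have hcoeff : 0 ≤ 1 / β - ((j : ℝ) + 2) + 1 := by
    have : (j : ℝ) + 2 < 1 / β := by rw [lt_div_iff₀ hβ0]; linarith
    linarith
  have hfix₁ : vj1 = (1 / β - ((j : ℝ) + 2)) * expectedExcess P X vj1 := by
    nth_rewrite 1 [hfix_j1]
    rw [hg, expectedExcess]
    push_cast
    ring
  have hfix₀ : vj = (1 / β - ((j : ℝ) + 2) + 1) * expectedExcess P X vj := by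
    nth_rewrite 1 [hfix_j]
    rw [hg, expectedExcess]
    ring
  exact lt_of_eq_mul_of_eq_succ_mul (expectedExcess_antitone hXint) hcoeff
    (expectedExcess_pos hXint hXpos) hfix₁ hfix₀

/-- If `(j+2)β < 1`, `v_j = g_j(v_j)`, `v_{j+1} = g_{j+1}(v_{j+1})` and
`P(X > v_{j+1}) > 0`, then `v_{j+1} < v_j`: the static stopping thresholds are strictly
decreasing in the number of probed users. -/
theorem static_thresholds_strictly_decreasing
    {Ω : Type*} [MeasurableSpace Ω] (P : Measure Ω) [IsProbabilityMeasure P]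
    (X : Ω → ℝ) (hXmeas : Measurable X) (hXnonneg : ∀ ω, 0 ≤ X ω)
    (hXint : Integrable X P) (hXmean : ∫ ω, X ω ∂P = 1)
    (β : ℝ) (hβ0 : 0 < β) (hβ1 : β < 1)
    (j : ℕ) (hjβ : ((j : ℝ) + 2) * β < 1)
    (g : ℕ → ℝ → ℝ)
    (hg : ∀ (m : ℕ) (v : ℝ),
      g m v = (1 / β - ((m : ℝ) + 1)) * ∫ ω, max (X ω - v) 0 ∂P)
    (vj vj1 : ℝ) (hvj : 0 ≤ vj) (hvj1 : 0 ≤ vj1)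
    (hfix_j : vj = g j vj) (hfix_j1 : vj1 = g (j + 1) vj1)
    (hXpos : 0 < P {ω | vj1 < X ω}) :
    vj1 < vj :=
  static_thresholds_strictly_decreasing_general P X hXint β hβ0 j hjβ g hg vj vj1 hfix_j hfix_j1
    hXpos
end

section
/- If T_k(n−1) > 0 for every k and exactly one user i is scheduled (I_i(n) = 1 and I_k(n) = 0 for k ≠ i), then the increase of the proportional-fair utility satisfies u(T(n)) − u(T(n−1)) = Σ_{k=1}^K ln( (n−1)/n + ((1 − βJ(n))/n)·s_k(n)·I_k(n) ), where s_k(n) = R_k(n)/T_k(n−1). Moreover, for a fixed number of probes J(n) with 1 − βJ(n) > 0, this increment is maximized over the choice of the scheduled user i by scheduling any user with the maximum throughput-normalized rate s_i(n) = max_k s_k(n). -/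
/-!
The recursion gives `T_k(n) = T_k(n-1) · ((n-1)/n + (1-βJ)/n · s_k · I_k)`, so the logarithmic
utility grows by the sum of the logarithms of these factors. When a single user `j` is scheduled,
every factor but the `j`-th equals `(n-1)/n`, so the increment is `log((n-1)/n + (1-βJ)/n · s_j)`
plus a constant, which is monotone in `s_j`.
-/

open Real Finset

section LogSums

variable {ι : Type*} [Fintype ι]

theorem sum_log_sub_sum_log_of_eq_mul {x y f : ι → ℝ} (hy : ∀ k, y k ≠ 0)
    (hyx : ∀ k, y k = x k * f k) :
    ∑ k, log (y k) - ∑ k, log (x k) = ∑ k, log (f k) := by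
  rw [← sum_sub_distrib]
  refine sum_congr rfl fun k _ => ?_
  obtain ⟨hx, hf⟩ := mul_ne_zero_iff.mp (hyx k ▸ hy k)
  rw [hyx k, log_mul hx hf, add_sub_cancel_left]

variable [DecidableEq ι]

theorem sum_log_add_mul_ite_eq (c : ℝ) (x : ι → ℝ) (j : ι) :
    ∑ k, log (c + x k * if k = j then 1 else 0) =
      log (c + x j) - log c + ∑ _k : ι, log c := by
  have hterm (k : ι) : log (c + x k * if k = j then 1 else 0) =
      (if k = j then log (c + x k) - log c else 0) + log c := by
    by_cases h : k = j <;> simp [h]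
  simp only [hterm, sum_add_distrib, sum_ite_eq', mem_univ, if_true]

theorem sum_log_add_mul_ite_le {c : ℝ} (hc : 0 < c) {x : ι → ℝ} (hx : ∀ k, 0 ≤ x k)
    {i j : ι} (hij : x i ≤ x j) :
    ∑ k, log (c + x k * if k = i then 1 else 0) ≤
      ∑ k, log (c + x k * if k = j then 1 else 0) := by
  rw [sum_log_add_mul_ite_eq, sum_log_add_mul_ite_eq]
  have hlog : log (c + x i) ≤ log (c + x j) :=
    log_le_log (by linarith [hx i]) (by linarith)
  linarith

end LogSums

theorem pf_utility_increment_general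
    (K n : ℕ) (hn : 2 ≤ n)
    (β : ℝ)
    (Jn : ℕ)
    (R : Fin K → ℝ) (hR : ∀ k, 0 ≤ R k)
    (T' T : Fin K → ℝ) (hT' : ∀ k, 0 < T' k) (hT : ∀ k, 0 < T k)
    (I : Fin K → ℝ)
    (B : Fin K → ℝ) (hB : ∀ k, B k = (1 - β * (Jn : ℝ)) * R k * I k)
    (hrec : ∀ k, T k = (((n : ℝ) - 1) / n) * T' k + (1 / n) * B k)
    (s : Fin K → ℝ) (hs : ∀ k, s k = R k / T' k) :
    ((∑ k, Real.log (T k)) - (∑ k, Real.log (T' k)) =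
      ∑ k, Real.log (((n : ℝ) - 1) / n + ((1 - β * (Jn : ℝ)) / n) * s k * I k)) ∧
    (1 - β * (Jn : ℝ) > 0 →
      ∀ imax : Fin K, (∀ k, s k ≤ s imax) →
        ∀ i' : Fin K,
          (∑ k, Real.log (((n : ℝ) - 1) / n +
              ((1 - β * (Jn : ℝ)) / n) * s k * (if k = i' then (1 : ℝ) else 0))) ≤
          ∑ k, Real.log (((n : ℝ) - 1) / n +
              ((1 - β * (Jn : ℝ)) / n) * s k * (if k = imax then (1 : ℝ) else 0))) := by
  refine ⟨sum_log_sub_sum_log_of_eq_mul (fun k => (hT k).ne') fun k => ?_, ?_⟩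
  · have := (hT' k).ne'
    rw [hrec k, hB k, hs k]
    field_simp
  · intro hgain imax himax i'
    have hn' : (2 : ℝ) ≤ n := by exact_mod_cast hn
    have hc : 0 < ((n : ℝ) - 1) / n := div_pos (by linarith) (by linarith)
    have ha : 0 ≤ (1 - β * (Jn : ℝ)) / n := div_nonneg hgain.le n.cast_nonneg
    have hs0 (k : Fin K) : 0 ≤ s k := hs k ▸ div_nonneg (hR k) (hT' k).le
    exact sum_log_add_mul_ite_le hc (x := fun k => (1 - β * (Jn : ℝ)) / n * s k)
      (fun k => mul_nonneg ha (hs0 k)) (mul_le_mul_of_nonneg_left (himax i') ha)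

/-- If `T_k(n−1) > 0` for every `k` and exactly one user `i` is scheduled, then the
increase of the proportional-fair utility is
`u(T(n)) − u(T(n−1)) = Σ_k ln((n−1)/n + ((1 − βJ(n))/n)·s_k(n)·I_k(n))` with
`s_k(n) = R_k(n)/T_k(n−1)`; moreover, for a fixed number of probes `J(n)` with
`1 − βJ(n) > 0`, this increment is maximized over the choice of the scheduled user
by scheduling any user with the maximum throughput-normalized rate. -/
theorem pf_utility_increment
    (K n : ℕ) (hK : 1 ≤ K) (hn : 2 ≤ n)
    (β : ℝ) (hβ0 : 0 < β) (hβ1 : β < 1)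
    (Jn : ℕ) (hJn1 : 1 ≤ Jn) (hJnK : Jn ≤ K)
    (R : Fin K → ℝ) (hR : ∀ k, 0 ≤ R k)
    (T' T : Fin K → ℝ) (hT' : ∀ k, 0 < T' k) (hT : ∀ k, 0 < T k)
    (I : Fin K → ℝ) (i : Fin K)
    (hIi : I i = 1) (hIne : ∀ k, k ≠ i → I k = 0)
    (B : Fin K → ℝ) (hB : ∀ k, B k = (1 - β * (Jn : ℝ)) * R k * I k)
    (hrec : ∀ k, T k = (((n : ℝ) - 1) / n) * T' k + (1 / n) * B k)
    (s : Fin K → ℝ) (hs : ∀ k, s k = R k / T' k) :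
    ((∑ k, Real.log (T k)) - (∑ k, Real.log (T' k)) =
      ∑ k, Real.log (((n : ℝ) - 1) / n + ((1 - β * (Jn : ℝ)) / n) * s k * I k)) ∧
    (1 - β * (Jn : ℝ) > 0 →
      ∀ imax : Fin K, (∀ k, s k ≤ s imax) →
        ∀ i' : Fin K,
          (∑ k, Real.log (((n : ℝ) - 1) / n +
              ((1 - β * (Jn : ℝ)) / n) * s k * (if k = i' then (1 : ℝ) else 0))) ≤
          ∑ k, Real.log (((n : ℝ) - 1) / n +
              ((1 - β * (Jn : ℝ)) / n) * s k * (if k = imax then (1 : ℝ) else 0))) :=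
  pf_utility_increment_general K n hn β Jn R hR T' T hT' hT I B hB hrec s hs
end
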